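/- The set of vectors w = (w₁,w₂,w₃,w₄,w₅,w₆) ∈ ℝ⁶ satisfying the four conditions (i) w₁ = w₆ = 0, (ii) (2−√2)w₂ + (−2+2√2)w₃ + (2−√2)w₅ = 0, (iii) 2w₂ − 2w₅ = 1, and (iv) (−5+2√2)w₂ + (4−4√2)w₃ + (3−2√2)w₄ + (−7+6√2)w₅ = −π/4, is exactly the line {(0, 1/2, −1/(2√2), (3/4 + 1/√2)(2−π), 0, 0) + t·(0, 1, −√2, −4−4√2, 1, 0) : t ∈ ℝ}. -/

import Mathlib

/-!
With `w 0 = w 5 = 0` split off, the system is triangular in `w 1, w 2, w 3` once `w 4` is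
fixed: (iii) gives `w 1 = 1/2 + w 4`; then (ii) is divided by `2√2 - 2`, where
`(2 - √2)/(√2 - 1) = √2`; then (iv) is multiplied by `(3 - 2√2)⁻¹ = 3 + 2√2`. Hence the
solutions form a line parametrized by `w 4`, which is also the parameter `t` of the line
on the right, since its direction vector has `4`-th coordinate `1`.
-/

lemma euler_weight_equations_iff {s c x₁ x₂ x₃ x₄ : ℝ} (hs : s ^ 2 = 2) :
    ((2 - s) * x₁ + (-2 + 2 * s) * x₂ + (2 - s) * x₄ = 0 ∧
      2 * x₁ - 2 * x₄ = 1 ∧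
      (-5 + 2 * s) * x₁ + (4 - 4 * s) * x₂ + (3 - 2 * s) * x₃ + (-7 + 6 * s) * x₄ = -(c / 4)) ↔
    (x₁ = 1 / 2 + x₄ ∧ x₂ = -(1 / (2 * s)) - s * x₄ ∧
      x₃ = (3 / 4 + 1 / s) * (2 - c) + (-4 - 4 * s) * x₄) := by
  have h1s : 1 / s = s / 2 := by
    have hs0 : s ≠ 0 := by rintro rfl; norm_num at hs
    field_simp
    linear_combination -hs
  have h2s : 1 / (2 * s) = s / 4 := by rw [mul_comm, ← div_div, h1s]; ring
  rw [h1s, h2s]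
  constructor
  · rintro ⟨h₂, h₁, h₃⟩
    obtain rfl : x₁ = 1 / 2 + x₄ := by linarith
    obtain rfl : x₂ = -(s / 4) - s * x₄ := by
      linear_combination ((1 + s) / 2) * h₂ + (1 / 4 - x₂ + x₄) * hs
    refine ⟨rfl, rfl, ?_⟩
    linear_combination (3 + 2 * s) * h₃ + (-3 + 4 * x₃ - 20 * x₄ - 2 * s - 8 * s * x₄) * hs
  · rintro ⟨rfl, rfl, rfl⟩
    refine ⟨?_, by ring, ?_⟩
    · linear_combination (-1 / 2 - 2 * x₄) * hs
    · linear_combination (-1 + 12 * x₄ + c) * hs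

lemma exists_eq_add_smul_iff {ι : Type*} {p d w : ι → ℝ} {i : ι} (hd : d i = 1) :
    (∃ t : ℝ, w = p + t • d) ↔ w = p + (w i - p i) • d := by
  refine ⟨?_, fun h ↦ ⟨_, h⟩⟩
  rintro ⟨t, rfl⟩
  simp [hd]

/-- `w i` is the weight of the configuration class `η_{i+1}`. -/
theorem stmt_5 :
    {w : Fin 6 → ℝ |
        w 0 = 0 ∧ w 5 = 0 ∧
        (2 - Real.sqrt 2) * w 1 + (-2 + 2 * Real.sqrt 2) * w 2 +
            (2 - Real.sqrt 2) * w 4 = 0 ∧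
        2 * w 1 - 2 * w 4 = 1 ∧
        (-5 + 2 * Real.sqrt 2) * w 1 + (4 - 4 * Real.sqrt 2) * w 2 +
            (3 - 2 * Real.sqrt 2) * w 3 + (-7 + 6 * Real.sqrt 2) * w 4 = -(Real.pi / 4)} =
      {w : Fin 6 → ℝ | ∃ t : ℝ,
        w = ![0, 1 / 2, -(1 / (2 * Real.sqrt 2)),
              (3 / 4 + 1 / Real.sqrt 2) * (2 - Real.pi), 0, 0] +
            t • ![0, 1, -Real.sqrt 2, -4 - 4 * Real.sqrt 2, 1, 0]} := by
  ext w
  rw [Set.mem_ofPred_eq, Set.mem_ofPred_eq, exists_eq_add_smul_iff (i := 4) rfl,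
    euler_weight_equations_iff (Real.sq_sqrt zero_le_two)]
  simp [funext_iff, Fin.forall_fin_succ, mul_comm, sub_eq_add_neg, and_comm, and_left_comm,
    and_assoc]
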